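/- arXiv:1511.05073 — 3 statements merged into one kernel-verified Lean document; each statement's English description precedes it below -/
import Mathlib

section
/- For β > 2, P > 0, λ > 0, the integral ∫₀^∞ (1 − exp(−t P r^{−β})) · 2π λ r dr equals π λ (t P)^{2/β} Γ(1 − 2/β) for every t > 0. -/
open MeasureTheory Real Set Filter Topology

/-!
Integrating by parts against `r ^ d / d`, the integral `∫₀^∞ (1 - exp (-s r^{-β})) r^{d-1} dr`
becomes `(s β / d) ∫₀^∞ r^{d-β-1} exp (-s r^{-β}) dr`; the boundary terms vanish because
`0 < d < β`, since `1 - exp (-x) ≤ min 1 x`. The substitution `r ↦ r⁻¹` turns the latter into the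
Gamma integral `∫₀^∞ x^{β-d-1} exp (-s x^β) dx`. The shot-noise exponent is the planar case `d = 2`.
-/

section Inversion

variable {p q b : ℝ}

lemma comp_rpow_neg_one_rpow_mul_exp_neg_mul_rpow {x : ℝ} (hx : 0 < x) :
    (|(-1 : ℝ)| * x ^ ((-1 : ℝ) - 1)) •
        ((x ^ (-1 : ℝ)) ^ (-q - 2) * exp (-b * (x ^ (-1 : ℝ)) ^ p)) =
      x ^ q * exp (-b * x ^ (-p)) := by
  rw [← rpow_mul hx.le, ← rpow_mul hx.le, smul_eq_mul, abs_neg, abs_one, one_mul, ← mul_assoc,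
    ← rpow_add hx]
  ring_nf

lemma integrableOn_rpow_mul_exp_neg_mul_rpow_neg (hp : 0 < p) (hq : q < -1) (hb : 0 < b) :
    IntegrableOn (fun x : ℝ => x ^ q * exp (-b * x ^ (-p))) (Ioi 0) :=
  ((integrableOn_Ioi_comp_rpow_iff (fun y : ℝ => y ^ (-q - 2) * exp (-b * y ^ p))
    (by norm_num : (-1 : ℝ) ≠ 0)).2
      (integrableOn_rpow_mul_exp_neg_mul_rpow (by linarith) hp hb)).congr_fun
    (fun _ hx => comp_rpow_neg_one_rpow_mul_exp_neg_mul_rpow hx) measurableSet_Ioi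

lemma integral_rpow_mul_exp_neg_mul_rpow_neg (hp : 0 < p) (hq : q < -1) (hb : 0 < b) :
    ∫ x in Ioi (0 : ℝ), x ^ q * exp (-b * x ^ (-p)) =
      b ^ ((q + 1) / p) * (1 / p) * Gamma (-(q + 1) / p) := by
  rw [← setIntegral_congr_fun measurableSet_Ioi
    (fun _ hx => comp_rpow_neg_one_rpow_mul_exp_neg_mul_rpow hx),
    integral_comp_rpow_Ioi (fun y : ℝ => y ^ (-q - 2) * exp (-b * y ^ p)) (by norm_num),
    integral_rpow_mul_exp_neg_mul_rpow hp (by linarith) hb]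
  ring_nf

end Inversion

lemma one_sub_exp_neg_mul_nonneg {s y : ℝ} (h : 0 ≤ s * y) : 0 ≤ 1 - exp (-s * y) := by
  rw [sub_nonneg, neg_mul, exp_le_one_iff, neg_nonpos]
  exact h

lemma one_sub_exp_neg_mul_le_one (s y : ℝ) : 1 - exp (-s * y) ≤ 1 :=
  sub_le_self 1 (exp_pos _).le

lemma one_sub_exp_neg_mul_le (s y : ℝ) : 1 - exp (-s * y) ≤ s * y := by
  rw [neg_mul]
  linarith [one_sub_le_exp_neg (s * y)]

section ShotNoise

variable {β d s : ℝ}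

lemma hasDerivAt_one_sub_exp_neg_mul_rpow_neg {r : ℝ} (hr : 0 < r) :
    HasDerivAt (fun r : ℝ => 1 - exp (-s * r ^ (-β)))
      (-(s * β) * (r ^ (-β - 1) * exp (-s * r ^ (-β)))) r :=
  (((hasDerivAt_rpow_const (p := -β) (Or.inl hr.ne')).const_mul (-s)).exp.const_sub 1).congr_deriv
    (by ring)

lemma integrableOn_one_sub_exp_neg_mul_rpow_neg_mul_rpow (hd : 0 < d) (hdβ : d < β)
    (hs : 0 < s) : IntegrableOn (fun r : ℝ => (1 - exp (-s * r ^ (-β))) * r ^ (d - 1)) (Ioi 0) := by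
  have hmeas : AEStronglyMeasurable (fun r : ℝ => (1 - exp (-s * r ^ (-β))) * r ^ (d - 1)) := by
    fun_prop
  rw [← Ioc_union_Ioi_eq_Ioi zero_le_one]
  refine IntegrableOn.union ?_ ?_
  · refine Integrable.mono'
      ((intervalIntegral.intervalIntegrable_rpow' (by linarith : -1 < d - 1)).1) hmeas.restrict
      ((ae_restrict_iff' measurableSet_Ioc).2 (.of_forall fun r hr => ?_))
    have hr0 : 0 < r := hr.1
    rw [norm_mul, norm_of_nonneg (one_sub_exp_neg_mul_nonneg (by positivity)),
      norm_of_nonneg (by positivity)]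
    exact mul_le_of_le_one_left (by positivity) (one_sub_exp_neg_mul_le_one _ _)
  · refine Integrable.mono' (((integrableOn_Ioi_rpow_of_lt (by linarith : -β + (d - 1) < -1)
      one_pos).const_mul s)) hmeas.restrict
      ((ae_restrict_iff' measurableSet_Ioi).2 (.of_forall fun r (hr : 1 < r) => ?_))
    have hr0 : 0 < r := one_pos.trans hr
    rw [norm_mul, norm_of_nonneg (one_sub_exp_neg_mul_nonneg (by positivity)),
      norm_of_nonneg (by positivity), rpow_add hr0, ← mul_assoc]
    exact mul_le_mul_of_nonneg_right (one_sub_exp_neg_mul_le _ _) (by positivity)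

lemma tendsto_one_sub_exp_neg_mul_rpow_neg_mul_rpow_nhdsGT_zero (hd : 0 < d) (hs : 0 ≤ s) :
    Tendsto (fun r : ℝ => (1 - exp (-s * r ^ (-β))) * r ^ d) (𝓝[>] 0) (𝓝 0) := by
  have hpow : Tendsto (fun r : ℝ => r ^ d) (𝓝[>] 0) (𝓝 0) := by
    simpa [zero_rpow hd.ne'] using
      ((continuous_rpow_const hd.le).tendsto 0).mono_left nhdsWithin_le_nhds
  refine squeeze_zero' ?_ ?_ hpow <;> filter_upwards [self_mem_nhdsWithin] with r (hr : 0 < r)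
  · exact mul_nonneg (one_sub_exp_neg_mul_nonneg (by positivity)) (by positivity)
  · exact mul_le_of_le_one_left (by positivity) (one_sub_exp_neg_mul_le_one _ _)

lemma tendsto_one_sub_exp_neg_mul_rpow_neg_mul_rpow_atTop (hdβ : d < β) (hs : 0 ≤ s) :
    Tendsto (fun r : ℝ => (1 - exp (-s * r ^ (-β))) * r ^ d) atTop (𝓝 0) := by
  have hpow : Tendsto (fun r : ℝ => s * r ^ (-β + d)) atTop (𝓝 0) := by
    simpa [neg_add_eq_sub] using (tendsto_rpow_neg_atTop (by linarith : 0 < β - d)).const_mul s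
  refine squeeze_zero' ?_ ?_ hpow <;> filter_upwards [eventually_gt_atTop 0] with r hr
  · exact mul_nonneg (one_sub_exp_neg_mul_nonneg (by positivity)) (by positivity)
  · rw [rpow_add hr, ← mul_assoc]
    exact mul_le_mul_of_nonneg_right (one_sub_exp_neg_mul_le _ _) (by positivity)

theorem integral_one_sub_exp_neg_mul_rpow_neg_mul_rpow (hd : 0 < d) (hdβ : d < β) (hs : 0 < s) :
    ∫ r in Ioi (0 : ℝ), (1 - exp (-s * r ^ (-β))) * r ^ (d - 1) =
      s ^ (d / β) * Gamma (1 - d / β) / d := by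
  have hβ : 0 < β := hd.trans hdβ
  have hderiv_uv : ∀ r ∈ Ioi (0 : ℝ),
      -(s * β) * (r ^ (-β - 1) * exp (-s * r ^ (-β))) * (r ^ d / d) =
        -(s * β / d) * (r ^ (d - β - 1) * exp (-s * r ^ (-β))) := fun r (hr : 0 < r) => by
    rw [show d - β - 1 = -β - 1 + d by ring, rpow_add hr]
    field_simp
  have hq : d - β - 1 < -1 := by linarith
  rw [integral_Ioi_mul_deriv_eq_deriv_mul (a' := 0 / d) (b' := 0 / d)
    (fun r hr => hasDerivAt_one_sub_exp_neg_mul_rpow_neg hr)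
    (fun r (hr : 0 < r) => ((hasDerivAt_rpow_const (Or.inl hr.ne')).div_const d).congr_deriv
      (by field_simp))
    (integrableOn_one_sub_exp_neg_mul_rpow_neg_mul_rpow hd hdβ hs)
    (IntegrableOn.congr_fun ((integrableOn_rpow_mul_exp_neg_mul_rpow_neg hβ hq hs).const_mul _)
      (fun r hr => (hderiv_uv r hr).symm) measurableSet_Ioi)
    (((tendsto_one_sub_exp_neg_mul_rpow_neg_mul_rpow_nhdsGT_zero hd hs.le).div_const d).congr
      fun _ => mul_div_assoc _ _ _)
    (((tendsto_one_sub_exp_neg_mul_rpow_neg_mul_rpow_atTop hdβ hs.le).div_const d).congr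
      fun _ => mul_div_assoc _ _ _),
    setIntegral_congr_fun measurableSet_Ioi hderiv_uv, integral_const_mul,
    integral_rpow_mul_exp_neg_mul_rpow_neg hβ hq hs,
    show (d - β - 1 + 1) / β = d / β - 1 by field_simp; ring,
    show -(d - β - 1 + 1) / β = 1 - d / β by field_simp; ring, rpow_sub_one hs.ne']
  field_simp
  ring

end ShotNoise

theorem shot_noise_exponent_general (β P lam t : ℝ) (hβ : 2 < β) (hP : 0 < P)
    (ht : 0 < t) :
    ∫ r in Ioi (0 : ℝ), (1 - Real.exp (-t * P * r ^ (-β))) * (2 * π * lam * r) =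
      π * lam * (t * P) ^ (2 / β) * Real.Gamma (1 - 2 / β) := by
  calc ∫ r in Ioi (0 : ℝ), (1 - exp (-t * P * r ^ (-β))) * (2 * π * lam * r)
      = 2 * π * lam * ∫ r in Ioi (0 : ℝ), (1 - exp (-(t * P) * r ^ (-β))) * r ^ ((2 : ℝ) - 1) := by
        rw [← integral_const_mul]
        refine setIntegral_congr_fun measurableSet_Ioi fun r _ => ?_
        rw [show (2 : ℝ) - 1 = 1 by norm_num, rpow_one, neg_mul t P]
        ring
    _ = π * lam * (t * P) ^ (2 / β) * Gamma (1 - 2 / β) := by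
        rw [integral_one_sub_exp_neg_mul_rpow_neg_mul_rpow two_pos hβ (mul_pos ht hP)]
        ring

/-- Shot-noise Laplace exponent from a PPP of intensity `λ` with path-loss
exponent `β` and no fading:
`∫₀^∞ (1 − exp(−t P r^{−β})) 2π λ r dr = π λ (tP)^{2/β} Γ(1 − 2/β)`. -/
theorem shot_noise_exponent (β P lam t : ℝ) (hβ : 2 < β) (hP : 0 < P)
    (hlam : 0 < lam) (ht : 0 < t) :
    ∫ r in Ioi (0 : ℝ), (1 - Real.exp (-t * P * r ^ (-β))) * (2 * π * lam * r) =
      π * lam * (t * P) ^ (2 / β) * Real.Gamma (1 - 2 / β) :=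
  shot_noise_exponent_general β P lam t hβ hP ht
end

section
/- Gauss's summation theorem: for Re(c − a − b) > 0 and c not a nonpositive integer, ₂F₁(a, b; c; 1) = Γ(c) Γ(c − a − b) / ( Γ(c − a) Γ(c − b) ). -/
open Real

/-- The Gauss hypergeometric function `₂F₁(a, b; c; z)`, defined by its power
series (interpreted as a `tsum`). -/
noncomputable def hyp2F1 (a b c z : ℝ) : ℝ :=
  ∑' n : ℕ, ((ascPochhammer ℝ n).eval a * (ascPochhammer ℝ n).eval b /
    (ascPochhammer ℝ n).eval c) * z ^ n / (n.factorial : ℝ)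

/-!
The classical proof through the contiguous relation in `c`. Let `tₙ(c)` be the `n`-th term of
`F(c) = ₂F₁(a, b; c; 1)`. Euler's limit for `Γ` gives `tₙ(c) = O(n^(a+b-c-1))`, so the series
converges and `n tₙ(c) → 0`. The coefficient identity
`c(c-a-b) tₙ(c) - (c-a)(c-b) tₙ(c+1) = c (n tₙ(c) - (n+1) tₙ₊₁(c))` then telescopes to
`F(c) = (c-a)(c-b)/(c(c-a-b)) F(c+1)`, and iterating,
`F(c) = (c-a)_N (c-b)_N / ((c)_N (c-a-b)_N) F(c+N)`.
As `N → ∞`, `F(c+N) → 1` by dominated convergence, while Euler's limit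
`(x)_N ~ N! N^(x-1) / Γ(x)` turns the Pochhammer ratio into `Γ(c)Γ(c-a-b)/(Γ(c-a)Γ(c-b))`.
-/

open Filter Topology Asymptotics Polynomial
open scoped Nat

theorem ascPochhammer_eval_eq_prod_range {S : Type*} [CommSemiring S] (n : ℕ) (s : S) :
    (ascPochhammer S n).eval s = ∏ j ∈ Finset.range n, (s + j) := by
  induction n with
  | zero => simp
  | succ n ih => rw [ascPochhammer_succ_eval, ih, Finset.prod_range_succ]

theorem ascPochhammer_eval_ne_zero {R : Type*} [CommRing R] [IsDomain R] {r : R}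
    (hr : ∀ m : ℕ, r ≠ -m) (n : ℕ) : (ascPochhammer R n).eval r ≠ 0 := by
  rw [Ne, ascPochhammer_eval_eq_zero_iff]
  rintro ⟨m, -, hm⟩
  exact hr m (by rw [hm, neg_neg])

theorem ascPochhammer_eval_mul_eval_add_one {S : Type*} [CommSemiring S] (n : ℕ) (s : S) :
    s * (ascPochhammer S n).eval (s + 1) = (ascPochhammer S n).eval s * (s + n) := by
  rw [← ascPochhammer_succ_eval, ascPochhammer_succ_left, eval_mul, eval_X, eval_comp,
    eval_add, eval_X, eval_one]

theorem abs_ascPochhammer_eval_le (x : ℝ) (n : ℕ) :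
    |(ascPochhammer ℝ n).eval x| ≤ (ascPochhammer ℝ n).eval |x| := by
  induction n with
  | zero => simp
  | succ n ih =>
    rw [ascPochhammer_succ_eval, ascPochhammer_succ_eval, abs_mul]
    have hxn : |x + n| ≤ |x| + n := (abs_add_le _ _).trans_eq (by rw [Nat.abs_cast])
    exact mul_le_mul ih hxn (abs_nonneg _) ((abs_nonneg _).trans ih)

theorem ascPochhammer_eval_le_of_le {x y : ℝ} (hx : 0 < x) (hxy : x ≤ y) (n : ℕ) :
    (ascPochhammer ℝ n).eval x ≤ (ascPochhammer ℝ n).eval y := by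
  induction n with
  | zero => simp
  | succ n ih =>
    rw [ascPochhammer_succ_eval, ascPochhammer_succ_eval]
    exact mul_le_mul ih (by linarith) (by positivity) ((ascPochhammer_pos n x hx).le.trans ih)

theorem tendsto_ascPochhammer_eval_atTop {n : ℕ} (hn : n ≠ 0) :
    Tendsto (fun x : ℝ => (ascPochhammer ℝ n).eval x) atTop atTop := by
  refine tendsto_atTop_of_leadingCoeff_nonneg _ ?_ ?_
  · rw [← natDegree_pos_iff_degree_pos, ascPochhammer_natDegree]
    exact Nat.pos_of_ne_zero hn
  · rw [(monic_ascPochhammer ℝ n).leadingCoeff]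
    exact zero_le_one

theorem ne_neg_natCast_of_pos {x : ℝ} (hx : 0 < x) (m : ℕ) : x ≠ -m := by
  have : -(m : ℝ) ≤ 0 := by simp
  intro h
  linarith

theorem add_natCast_ne_neg_natCast {x : ℝ} (hx : ∀ m : ℕ, x ≠ -m) (N m : ℕ) :
    x + N ≠ -m := fun h => hx (m + N) (by push_cast; linarith)

namespace Real

theorem tendsto_inv_GammaSeq (x : ℝ) :
    Tendsto (fun n => (GammaSeq x n)⁻¹) atTop (𝓝 (Gamma x)⁻¹) := by
  by_cases hx : Gamma x = 0
  · obtain ⟨m, rfl⟩ := (Gamma_eq_zero_iff x).1 hx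
    rw [hx, inv_zero]
    refine tendsto_const_nhds.congr' ?_
    filter_upwards [eventually_ge_atTop m] with n hn
    rw [GammaSeq, ← ascPochhammer_eval_eq_prod_range,
      ascPochhammer_eval_neg_coe_nat_of_lt (Nat.lt_succ_of_le hn), div_zero, inv_zero]
  · exact (GammaSeq_tendsto_Gamma x).inv₀ hx

/-- Euler's limit formula in Pochhammer form, `(x)ₙ ~ n! n^(x-1) / Γ(x)`. At a pole of `Γ` the
limit is `0⁻¹ = 0`, matching the eventual vanishing of `(x)ₙ`. -/
theorem tendsto_ascPochhammer_eval_mul_rpow_div_factorial (x : ℝ) :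
    Tendsto (fun n : ℕ => (ascPochhammer ℝ n).eval x * (n : ℝ) ^ (1 - x) / n !) atTop
      (𝓝 (Gamma x)⁻¹) := by
  have hlim := (tendsto_inv_GammaSeq x).mul (tendsto_natCast_div_add_atTop x)
  rw [mul_one] at hlim
  refine hlim.congr' ?_
  filter_upwards [eventually_gt_atTop 0,
    tendsto_natCast_atTop_atTop.eventually_gt_atTop (-x)] with n hn hxn
  have hn : (0 : ℝ) < n := Nat.cast_pos.2 hn
  have hxn : (n : ℝ) + x ≠ 0 := by linarith
  rw [GammaSeq, inv_div, ← ascPochhammer_eval_eq_prod_range, ascPochhammer_succ_eval,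
    rpow_sub hn, rpow_one]
  field_simp
  ring

theorem tendsto_ascPochhammer_ratio_mul_rpow {x y z w : ℝ} (hz : ∀ m : ℕ, z ≠ -m)
    (hw : ∀ m : ℕ, w ≠ -m) :
    Tendsto (fun n : ℕ => (ascPochhammer ℝ n).eval x * (ascPochhammer ℝ n).eval y /
        ((ascPochhammer ℝ n).eval z * (ascPochhammer ℝ n).eval w) * (n : ℝ) ^ (z + w - x - y))
      atTop (𝓝 (Gamma z * Gamma w / (Gamma x * Gamma y))) := by
  have hlim := ((tendsto_ascPochhammer_eval_mul_rpow_div_factorial x).mul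
    (tendsto_ascPochhammer_eval_mul_rpow_div_factorial y)).div
    ((tendsto_ascPochhammer_eval_mul_rpow_div_factorial z).mul
      (tendsto_ascPochhammer_eval_mul_rpow_div_factorial w))
    (by simp [Gamma_ne_zero hz, Gamma_ne_zero hw])
  convert hlim.congr' ?_ using 2
  · simp only [div_eq_mul_inv, mul_inv, inv_inv]
    ring
  filter_upwards [eventually_gt_atTop 0] with n hn
  have hn : (0 : ℝ) < n := Nat.cast_pos.2 hn
  have hz := ascPochhammer_eval_ne_zero hz n
  have hw := ascPochhammer_eval_ne_zero hw n
  simp only [Pi.div_apply, rpow_sub hn, rpow_add hn, rpow_one]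
  field_simp

end Real

noncomputable def hyp2F1Coeff (a b c : ℝ) (n : ℕ) : ℝ :=
  (ascPochhammer ℝ n).eval a * (ascPochhammer ℝ n).eval b / ((ascPochhammer ℝ n).eval c * n !)

theorem hyp2F1_one_eq_tsum (a b c : ℝ) : hyp2F1 a b c 1 = ∑' n, hyp2F1Coeff a b c n := by
  simp only [hyp2F1, hyp2F1Coeff, one_pow, mul_one, div_div]

section Coeff

variable {a b c : ℝ}

theorem hyp2F1Coeff_succ (n : ℕ) :
    hyp2F1Coeff a b c (n + 1) =
      hyp2F1Coeff a b c n * ((a + n) * (b + n) / ((c + n) * (n + 1))) := by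
  simp only [hyp2F1Coeff, ascPochhammer_succ_eval, Nat.factorial_succ, Nat.cast_mul,
    Nat.cast_succ, div_eq_mul_inv, mul_inv]
  ring

theorem isBigO_hyp2F1Coeff (hc : ∀ m : ℕ, c ≠ -m) :
    hyp2F1Coeff a b c =O[atTop] fun n : ℕ => (n : ℝ) ^ (a + b - c - 1) := by
  have hlim := tendsto_ascPochhammer_ratio_mul_rpow (x := a) (y := b) hc
    (ne_neg_natCast_of_pos one_pos)
  refine ((hlim.isBigO_one ℝ).mul
    (isBigO_refl (fun n : ℕ => (n : ℝ) ^ (a + b - c - 1)) _)).congr' ?_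
    (.of_forall fun _ => one_mul _)
  filter_upwards [eventually_gt_atTop 0] with n hn
  rw [ascPochhammer_eval_one, mul_assoc, ← rpow_add (Nat.cast_pos.2 hn),
    show c + 1 - a - b + (a + b - c - 1) = 0 by ring, rpow_zero, mul_one, hyp2F1Coeff]

theorem summable_hyp2F1Coeff (hc : ∀ m : ℕ, c ≠ -m) (h : 0 < c - a - b) :
    Summable (hyp2F1Coeff a b c) :=
  summable_of_isBigO_nat (summable_nat_rpow.2 (by linarith)) (isBigO_hyp2F1Coeff hc)

theorem tendsto_natCast_mul_hyp2F1Coeff (hc : ∀ m : ℕ, c ≠ -m) (h : 0 < c - a - b) :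
    Tendsto (fun n : ℕ => n * hyp2F1Coeff a b c n) atTop (𝓝 0) := by
  have hO : (fun n : ℕ => n * hyp2F1Coeff a b c n) =O[atTop]
      fun n : ℕ => (n : ℝ) ^ (-(c - a - b)) := by
    refine ((isBigO_refl _ _).mul (isBigO_hyp2F1Coeff hc)).congr' (by rfl) ?_
    filter_upwards [eventually_gt_atTop 0] with n hn
    rw [mul_comm, ← rpow_add_one (Nat.cast_pos.2 hn).ne']
    ring_nf
  exact hO.trans_tendsto ((tendsto_rpow_neg_atTop h).comp tendsto_natCast_atTop_atTop)

theorem hyp2F1Coeff_contiguous (hc : ∀ m : ℕ, c ≠ -m) (n : ℕ) :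
    c * (c - a - b) * hyp2F1Coeff a b c n - (c - a) * (c - b) * hyp2F1Coeff a b (c + 1) n =
      c * (n * hyp2F1Coeff a b c n - (n + 1) * hyp2F1Coeff a b c (n + 1)) := by
  have hcn : c + n ≠ 0 := by simpa using add_natCast_ne_neg_natCast hc n 0
  have hpoch := ascPochhammer_eval_ne_zero hc n
  have hshift :
      (ascPochhammer ℝ n).eval (c + 1) = (ascPochhammer ℝ n).eval c * (c + n) / c := by
    rw [← ascPochhammer_eval_mul_eval_add_one, mul_div_cancel_left₀ _ (by simpa using hc 0)]
  rw [hyp2F1Coeff_succ, hyp2F1Coeff, hyp2F1Coeff, hshift]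
  field_simp
  ring

theorem hyp2F1_one_eq_mul_hyp2F1_one_add_one (hc : ∀ m : ℕ, c ≠ -m) (h : 0 < c - a - b) :
    hyp2F1 a b c 1 = (c - a) * (c - b) / (c * (c - a - b)) * hyp2F1 a b (c + 1) 1 := by
  have hc0 : c ≠ 0 := by simpa using hc 0
  have hc1 : ∀ m : ℕ, c + 1 ≠ -m := by exact_mod_cast add_natCast_ne_neg_natCast hc 1
  have hsum := ((summable_hyp2F1Coeff hc h).hasSum.mul_left (c * (c - a - b))).sub
    ((summable_hyp2F1Coeff (a := a) (b := b) hc1 (by linarith)).hasSum.mul_left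
      ((c - a) * (c - b)))
  have htel : Tendsto (fun N => ∑ n ∈ Finset.range N,
      (c * (c - a - b) * hyp2F1Coeff a b c n - (c - a) * (c - b) * hyp2F1Coeff a b (c + 1) n))
      atTop (𝓝 0) := by
    set u := fun n : ℕ => (n : ℝ) * hyp2F1Coeff a b c n
    have hu (n : ℕ) : c * (c - a - b) * hyp2F1Coeff a b c n -
        (c - a) * (c - b) * hyp2F1Coeff a b (c + 1) n = c * (u n - u (n + 1)) := by
      simp only [u]
      push_cast
      exact hyp2F1Coeff_contiguous hc n
    simp_rw [hu, ← Finset.mul_sum, Finset.sum_range_sub']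
    simpa [u] using ((tendsto_natCast_mul_hyp2F1Coeff hc h).const_sub 0).const_mul c
  have := tendsto_nhds_unique hsum.tendsto_sum_nat htel
  rw [hyp2F1_one_eq_tsum, hyp2F1_one_eq_tsum]
  field_simp
  linarith

theorem hyp2F1_one_eq_ascPochhammer_ratio_mul (hc : ∀ m : ℕ, c ≠ -m) (h : 0 < c - a - b)
    (N : ℕ) :
    hyp2F1 a b c 1 = (ascPochhammer ℝ N).eval (c - a) * (ascPochhammer ℝ N).eval (c - b) /
      ((ascPochhammer ℝ N).eval c * (ascPochhammer ℝ N).eval (c - a - b)) *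
        hyp2F1 a b (c + N) 1 := by
  induction N with
  | zero => simp
  | succ N ih =>
    rw [ih, hyp2F1_one_eq_mul_hyp2F1_one_add_one (add_natCast_ne_neg_natCast hc N)
      (by have := N.cast_nonneg (α := ℝ); linarith)]
    simp only [ascPochhammer_succ_eval, Nat.cast_succ, ← add_assoc, div_eq_mul_inv, mul_inv]
    ring_nf

theorem abs_hyp2F1Coeff_le {x y : ℝ} (hy : 0 < y) (hyx : y ≤ x) (n : ℕ) :
    |hyp2F1Coeff a b x n| ≤ hyp2F1Coeff |a| |b| y n := by
  have hfact : (0 : ℝ) < n ! := by positivity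
  rw [hyp2F1Coeff, hyp2F1Coeff, abs_div, abs_mul, abs_mul,
    abs_of_pos (ascPochhammer_pos n x (hy.trans_le hyx)), abs_of_pos hfact]
  have ha := abs_ascPochhammer_eval_le a n
  have hb := abs_ascPochhammer_eval_le b n
  have ha0 := (abs_nonneg _).trans ha
  have hb0 := (abs_nonneg _).trans hb
  have hy0 := ascPochhammer_pos n y hy
  have hpoch := ascPochhammer_eval_le_of_le hy hyx n
  gcongr

end Coeff

theorem tendsto_hyp2F1Coeff_atTop (a b : ℝ) (n : ℕ) :
    Tendsto (fun c => hyp2F1Coeff a b c n) atTop (𝓝 (if n = 0 then 1 else 0)) := by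
  rcases eq_or_ne n 0 with rfl | hn
  · simp [hyp2F1Coeff]
  rw [if_neg hn]
  exact tendsto_const_nhds.div_atTop
    ((tendsto_ascPochhammer_eval_atTop hn).atTop_mul_const (by positivity))

theorem tendsto_hyp2F1_one_atTop (a b : ℝ) :
    Tendsto (fun c => hyp2F1 a b c 1) atTop (𝓝 1) := by
  have hy : 0 < |a| + |b| + 1 := by positivity
  have hlim := tendsto_tsum_of_dominated_convergence
    (summable_hyp2F1Coeff (a := |a|) (b := |b|) (ne_neg_natCast_of_pos hy) (by linarith))
    (tendsto_hyp2F1Coeff_atTop a b)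
    (by filter_upwards [eventually_ge_atTop (|a| + |b| + 1)] with x hx n
        exact abs_hyp2F1Coeff_le hy hx n)
  simpa only [tsum_ite_eq, ← hyp2F1_one_eq_tsum] using hlim

/-- Gauss's summation theorem:
`₂F₁(a, b; c; 1) = Γ(c)Γ(c − a − b)/(Γ(c − a)Γ(c − b))`
for `c − a − b > 0` and `c` not a nonpositive integer. -/
theorem hyp2F1_gauss_sum (a b c : ℝ) (h : 0 < c - a - b)
    (hc : ∀ n : ℕ, c ≠ -(n : ℝ)) :
    hyp2F1 a b c 1 =
      Real.Gamma c * Real.Gamma (c - a - b) /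
        (Real.Gamma (c - a) * Real.Gamma (c - b)) := by
  have hratio := tendsto_ascPochhammer_ratio_mul_rpow (x := c - a) (y := c - b) hc
    (ne_neg_natCast_of_pos h)
  have htail := (tendsto_hyp2F1_one_atTop a b).comp
    (tendsto_atTop_add_const_left atTop c tendsto_natCast_atTop_atTop)
  rw [show c + (c - a - b) - (c - a) - (c - b) = 0 by ring] at hratio
  have hprod := hratio.mul htail
  simp only [rpow_zero, mul_one] at hprod
  exact tendsto_nhds_unique
    (tendsto_const_nhds.congr (hyp2F1_one_eq_ascPochhammer_ratio_mul hc h)) hprod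
end

section
/- With C_u(q) as above, any stationary point q* ∈ (0, 1) of C_u satisfies (A + λ_s)((1 − q*) c γ_O + λ_s)² = λ_s (A + c q* γ_I + λ_s)², and the solution is q* = [ (A + λ_s)(c² γ_O² + d) − (c(A + c γ_I) γ_O + d) √(λ_s (A + λ_s)) ] / [ c² ( −γ_I² λ_s + γ_O² (A + λ_s) ) ] where d = c(γ_I + γ_O) λ_s, provided the denominator is nonzero. -/
open Set

/-- Any stationary point `q* ∈ (0,1)` of
`C_u(q) = q λ_s/(q c γ_I + λ_s + A) + (1 − q) λ_s/((1 − q) c γ_O + λ_s)`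
satisfies `(A + λ_s)((1 − q*) c γ_O + λ_s)² = λ_s (A + c q* γ_I + λ_s)²`, and,
provided the denominator is nonzero, equals the closed-form root
`q* = [(A + λ_s)(c²γ_O² + d) − (c(A + cγ_I)γ_O + d)√(λ_s(A + λ_s))]
      / [c²(−γ_I² λ_s + γ_O²(A + λ_s))]` with `d = c(γ_I + γ_O)λ_s`. -/
theorem optimal_q_stationary_point (lams c γI γO A q : ℝ) (hlams : 0 < lams)
    (hc : 0 < c) (hγI : 0 < γI) (hγO : 0 < γO) (hA : 0 ≤ A)
    (hq : q ∈ Ioo (0 : ℝ) 1)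
    (hstat : HasDerivAt (fun q : ℝ =>
        q * lams / (q * c * γI + lams + A) +
          (1 - q) * lams / ((1 - q) * c * γO + lams)) 0 q) :
    (A + lams) * ((1 - q) * c * γO + lams) ^ 2 =
        lams * (A + c * q * γI + lams) ^ 2 ∧
      (c ^ 2 * (-γI ^ 2 * lams + γO ^ 2 * (A + lams)) ≠ 0 →
        q = ((A + lams) * (c ^ 2 * γO ^ 2 + c * (γI + γO) * lams) -
              (c * (A + c * γI) * γO + c * (γI + γO) * lams) *
                Real.sqrt (lams * (A + lams))) /
            (c ^ 2 * (-γI ^ 2 * lams + γO ^ 2 * (A + lams)))) := by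
  obtain ⟨hq0, hq1⟩ := hq
  have h1q : (0:ℝ) < 1 - q := by linarith
  have hD1 : (0:ℝ) < q * c * γI + lams + A := by positivity
  have hD2 : (0:ℝ) < (1 - q) * c * γO + lams := by positivity
  -- compute the derivative explicitly
  have hnum1 : HasDerivAt (fun x : ℝ => x * lams) lams q := by
    simpa using (hasDerivAt_id q).mul_const lams
  have hden1 : HasDerivAt (fun x : ℝ => x * c * γI + lams + A) (1 * c * γI) q :=
    ((((hasDerivAt_id q).mul_const c).mul_const γI).add_const lams).add_const A
  have hnum2 : HasDerivAt (fun x : ℝ => (1 - x) * lams) (-1 * lams) q :=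
    ((hasDerivAt_id q).const_sub 1).mul_const lams
  have hden2 : HasDerivAt (fun x : ℝ => (1 - x) * c * γO + lams) (-1 * c * γO) q :=
    ((((hasDerivAt_id q).const_sub 1).mul_const c).mul_const γO).add_const lams
  have hderiv := (hnum1.div hden1 hD1.ne').add (hnum2.div hden2 hD2.ne')
  have key := hstat.unique hderiv
  -- turn into polynomial identity
  have hkey : (A + lams) * ((1 - q) * c * γO + lams) ^ 2 =
      lams * (A + c * q * γI + lams) ^ 2 := by
    have h2 := hD1.ne'
    have h3 := hD2.ne'
    field_simp at key
    nlinarith [key, hlams, sq_nonneg q]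
  refine ⟨hkey, fun hM => ?_⟩
  -- square roots
  set s := Real.sqrt lams with hsdef
  set t := Real.sqrt (A + lams) with htdef
  have hs2 : s ^ 2 = lams := Real.sq_sqrt hlams.le
  have ht2 : t ^ 2 = A + lams := Real.sq_sqrt (by linarith)
  have hr : Real.sqrt (lams * (A + lams)) = s * t := Real.sqrt_mul hlams.le _
  have hlin : t * ((1 - q) * c * γO + lams) = s * (A + c * q * γI + lams) := by
    have h2 : 0 ≤ t * ((1 - q) * c * γO + lams) := by positivity
    have h3 : 0 ≤ s * (A + c * q * γI + lams) := by positivity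
    have h1 : (t * ((1 - q) * c * γO + lams)) ^ 2 =
        (s * (A + c * q * γI + lams)) ^ 2 := by
      rw [mul_pow, mul_pow, hs2, ht2]; linarith [hkey]
    rw [← Real.sqrt_sq h2, ← Real.sqrt_sq h3, h1]
  rw [hr, eq_div_iff hM]
  have hA' : A = t ^ 2 - s ^ 2 := by linarith
  have hl' : lams = s ^ 2 := hs2.symm
  rw [hA', hl'] at hlin ⊢
  linear_combination (-(c * (t * γO - s * γI))) * hlin
end
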